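/- Let $\rho : [0,1]^q \to Z_+ := ([0,1]^{q-1} \times \{0\}) \cup (\partial [0,1]^{q-1} \times [0,1])$ be a retraction (i.e., $\rho$ restricted to $Z_+$ is the identity). Define $r : [-1,1]^q \to [-1,1]^q$ by $r_j(x) = \pm \rho_j(|x_1|, \dots, |x_q|)$ with sign matching that of $x_j$. Then the image of $r$ equals $Z := \left(\bigcup_{j=1}^{q} [-1,1]^{j-1} \times \{0\} \times [-1,1]^{q-j}\right) \cup \left(\bigcup_{j=1}^{q-1} [-1,1]^{j-1} \times \{-1,1\} \times [-1,1]^{q-j}\right)$, and $r$ restricted to $Z$ is the identity. -/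
import Mathlib


/-- The cube `[0,1]^q`. -/
def cubePos (q : ℕ) : Set (Fin q → ℝ) := {y | ∀ i, y i ∈ Set.Icc (0 : ℝ) 1}

/-- The subspace `[0,1]^{q-1} × {0} ∪ ∂[0,1]^{q-1} × [0,1]` of `[0,1]^q`. -/
def Zpos (q : ℕ) : Set (Fin q → ℝ) :=
  {y | (∀ i, y i ∈ Set.Icc (0 : ℝ) 1) ∧
    ((∃ j, y j = 0) ∨ ∃ j : Fin q, (j : ℕ) < q - 1 ∧ y j = 1)}

/-- The cube `[-1,1]^q`. -/
def cube (q : ℕ) : Set (Fin q → ℝ) := {x | ∀ i, x i ∈ Set.Icc (-1 : ℝ) 1}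

/-- The reflection construction: `r_j(x) = sgn(x_j) ρ_j(|x_1|, …, |x_q|)`. -/
noncomputable def rMap {q : ℕ} (ρ : (Fin q → ℝ) → (Fin q → ℝ)) (x : Fin q → ℝ) :
    Fin q → ℝ :=
  fun j => if 0 ≤ x j then ρ (fun i => |x i|) j else -(ρ (fun i => |x i|) j)

/-- The subspace `Z` of the cube `[-1,1]^q`: points with some coordinate `0`,
or one of the first `q-1` coordinates equal to `±1`. -/
def Zfull (q : ℕ) : Set (Fin q → ℝ) :=
  {x | (∀ i, x i ∈ Set.Icc (-1 : ℝ) 1) ∧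
    ((∃ j, x j = 0) ∨ ∃ j : Fin q, (j : ℕ) < q - 1 ∧ (x j = -1 ∨ x j = 1))}

theorem stmt_15 {q : ℕ} (ρ : (Fin q → ℝ) → (Fin q → ℝ))
    (hmaps : Set.MapsTo ρ (cubePos q) (Zpos q))
    (hretr : ∀ y ∈ Zpos q, ρ y = y) :
    rMap ρ '' cube q = Zfull q ∧ ∀ x ∈ Zfull q, rMap ρ x = x := by
  have hfix : ∀ x ∈ Zfull q, rMap ρ x = x := by
    intro x hx
    obtain ⟨hbd, hor⟩ := hx
    have habs : (fun i => |x i|) ∈ Zpos q := by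
      refine ⟨fun i => ⟨abs_nonneg _, abs_le.mpr ⟨(hbd i).1, (hbd i).2⟩⟩, ?_⟩
      rcases hor with ⟨j, hj⟩ | ⟨j, hjq, hj⟩
      · exact Or.inl ⟨j, by simp [hj]⟩
      · refine Or.inr ⟨j, hjq, ?_⟩
        rcases hj with h | h <;> simp [h]
    have hρ : ρ (fun i => |x i|) = fun i => |x i| := hretr _ habs
    funext j
    simp only [rMap, hρ]
    rcases le_or_gt 0 (x j) with h | h
    · simp [h, abs_of_nonneg h]
    · simp [not_le.mpr h, abs_of_neg h]
  refine ⟨Set.Subset.antisymm ?_ ?_, hfix⟩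
  · rintro _ ⟨x, hx, rfl⟩
    have habs : (fun i => |x i|) ∈ cubePos q :=
      fun i => ⟨abs_nonneg _, abs_le.mpr ⟨(hx i).1, (hx i).2⟩⟩
    obtain ⟨hbd, hor⟩ := hmaps habs
    constructor
    · intro i
      simp only [rMap]
      rcases le_or_gt 0 (x i) with h | h
      · simp only [if_pos h]
        exact ⟨le_trans (by norm_num) (hbd i).1, (hbd i).2⟩
      · simp only [if_neg (not_le.mpr h)]
        constructor <;> [linarith [(hbd i).2]; linarith [(hbd i).1]]
    · rcases hor with ⟨j, hj⟩ | ⟨j, hjq, hj⟩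
      · refine Or.inl ⟨j, ?_⟩
        simp only [rMap, hj]
        split <;> simp
      · refine Or.inr ⟨j, hjq, ?_⟩
        simp only [rMap, hj]
        split <;> simp
  · intro x hx
    exact ⟨x, fun i => ⟨(hx.1 i).1, (hx.1 i).2⟩, hfix x hx⟩
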